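/- The power of preemption for MINCONNECTIVITY on a path is Θ(log |E|): there exist constants c₁, c₂ > 0 such that (i) for every maintenance instance on a path with n ≥ 2 jobs and every feasible preemptive schedule with busy time a, there exists a feasible non-preemptive schedule with busy time at most c₁ · a · log n; and (ii) for every integer ℓ ≥ 2 there exist a maintenance instance on a path with n = ℓ(ℓ+1)/2 jobs and a feasible preemptive schedule with busy time P > 0 such that every feasible non-preemptive schedule has busy time at least c₂ · P · log n. -/

import Mathlib

/-!
Upper bound. Let `U` be the busy set of the preemptive schedule, `a = |U|`, and
`F x = |U ∩ (-∞, x]|`; across the window of a job `e`, `F` rises by at least `p e`. Jobs with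
`p e ≤ a / n` start at their release dates and cost at most `a` together. A job with
`a / 2 ^ (k + 1) < p e ≤ a / 2 ^ k` has a window in which `F` crosses a level `m · a / 2 ^ (k + 1)`,
and it is placed next to the first point where `F` reaches that level. A class `k ≤ log₂ n` has
at most `2 ^ (k + 1) + 1` such points, each covered by an interval of length `2 a / 2 ^ k`, so
every class costs `O(a)`.

Lower bound. Level `t < T ≈ log₄ n` consists of `4 ^ t` jobs with consecutive windows of
length `4 ^ (-t)` and processing time `ε 4 ^ (-t)`, where `ε = 1 / (6 T)`. Preemptively, every job
runs on the same comb of `4 ^ T` cells of length `ε 4 ^ (-T)`, so the busy time is `ε`.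
Non-preemptively, each level is busy for time `ε`, and an interval of length `L` meets at most
`L 4 ^ t + 2` windows of level `t`, so level `t` overlaps the earlier levels in measure at most
`t ε² + 2 ε / 3 ≤ 5 ε / 6`. Each level thus adds `ε / 6`, for a total of `T ε / 6`.
-/

open MeasureTheory Set
open scoped ENNReal

/-- Feasibility of a non-preemptive schedule of jobs on a path: job `i` starts at `s i`
within its window and is processed during `[s i, s i + p i]`. -/
def PathNPFeasible {ι : Type*} (r d p : ι → ℝ) (s : ι → ℝ) : Prop :=
  ∀ i, r i ≤ s i ∧ s i + p i ≤ d i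

/-- Feasibility of a preemptive schedule of jobs on a path: job `i` is processed during the
measurable set `S i ⊆ [r i, d i]` of measure `p i`. -/
def PathPFeasible {ι : Type*} (r d p : ι → ℝ) (S : ι → Set ℝ) : Prop :=
  ∀ i, MeasurableSet (S i) ∧ S i ⊆ Set.Icc (r i) (d i) ∧
    volume (S i) = ENNReal.ofReal (p i)

/-- The busy time of a non-preemptive schedule: the measure of the union of the
processing intervals (= the total disconnected time on a path). -/
noncomputable def npBusy {ι : Type*} (p : ι → ℝ) (s : ι → ℝ) : ℝ≥0∞ :=
  volume (⋃ i, Set.Icc (s i) (s i + p i))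

/-- The busy time of a preemptive schedule: the measure of the union of the
processing sets (= the total disconnected time on a path). -/
noncomputable def pBusy {ι : Type*} (S : ι → Set ℝ) : ℝ≥0∞ :=
  volume (⋃ i, S i)

noncomputable def cumulativeVolume (U : Set ℝ) (x : ℝ) : ℝ :=
  (volume (U ∩ Iic x)).toReal

section CumulativeVolume

variable {U : Set ℝ}

lemma cumulativeVolume_mono (hU : volume U ≠ ∞) : Monotone (cumulativeVolume U) :=
  fun _ _ hxy => ENNReal.toReal_mono (measure_ne_top_of_subset inter_subset_left hU)
    (measure_mono (inter_subset_inter_right _ (Iic_subset_Iic.2 hxy)))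

lemma cumulativeVolume_nonneg (x : ℝ) : 0 ≤ cumulativeVolume U x := ENNReal.toReal_nonneg

lemma cumulativeVolume_le (hU : volume U ≠ ∞) (x : ℝ) :
    cumulativeVolume U x ≤ (volume U).toReal :=
  ENNReal.toReal_mono hU (measure_mono inter_subset_left)

lemma cumulativeVolume_add_le (hU : volume U ≠ ∞) {r d : ℝ} (hrd : r ≤ d) {S : Set ℝ}
    (hS : S ⊆ U ∩ Icc r d) : cumulativeVolume U r + (volume S).toReal ≤ cumulativeVolume U d := by
  have hsplit := measure_inter_add_sdiff (μ := volume) (U ∩ Iic d) (measurableSet_Iic (a := r))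
  rw [inter_assoc, Iic_inter_Iic, min_eq_right hrd] at hsplit
  have hS_le : volume S ≤ volume ((U ∩ Iic d) \ Iic r) := by
    calc volume S ≤ volume ({r} ∪ ((U ∩ Iic d) \ Iic r)) := measure_mono fun z hz => by
          rcases eq_or_lt_of_le (hS hz).2.1 with h | h
          · exact Or.inl h.symm
          · exact Or.inr ⟨⟨(hS hz).1, (hS hz).2.2⟩, not_le.2 h⟩
      _ ≤ volume ({r} : Set ℝ) + volume ((U ∩ Iic d) \ Iic r) := measure_union_le _ _
      _ = volume ((U ∩ Iic d) \ Iic r) := by rw [Real.volume_singleton, zero_add]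
  have hfin : volume ((U ∩ Iic d) \ Iic r) ≠ ∞ := measure_ne_top_of_subset (fun z hz => hz.1.1) hU
  unfold cumulativeVolume
  rw [← hsplit, ENNReal.toReal_add (measure_ne_top_of_subset inter_subset_left hU) hfin]
  exact add_le_add le_rfl (ENNReal.toReal_mono hfin hS_le)

end CumulativeVolume

lemma csInf_setOf_le_mem_Icc {F : ℝ → ℝ} (hF : Monotone F) {r d y : ℝ} (hr : F r < y)
    (hd : y ≤ F d) : sInf {z | y ≤ F z} ∈ Icc r d := by
  have hlb : r ∈ lowerBounds {z | y ≤ F z} := fun z hz =>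
    le_of_not_gt fun hzr => (hr.trans_le hz).not_ge (hF hzr.le)
  exact ⟨le_csInf ⟨d, hd⟩ hlb, csInf_le ⟨r, hlb⟩ hd⟩

lemma exists_nat_mul_le_csInf_mem_Icc {F : ℝ → ℝ} (hF : Monotone F) {q r d : ℝ} (hq : 0 < q)
    (hr : 0 ≤ F r) (hrd : F r + q ≤ F d) :
    ∃ m : ℕ, m * q ≤ F d ∧ sInf {z | m * q ≤ F z} ∈ Icc r d := by
  set m := ⌊F r / q⌋₊ + 1
  have hm_gt : F r < m * q := by
    have := Nat.lt_floor_add_one (F r / q)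
    rw [div_lt_iff₀ hq] at this
    push_cast [m]
    exact this
  have hm_le : m * q ≤ F d := by
    have := Nat.floor_le (div_nonneg hr hq.le)
    rw [le_div_iff₀ hq] at this
    push_cast [m]
    linarith
  exact ⟨m, hm_le, csInf_setOf_le_mem_Icc hF hm_gt hm_le⟩

lemma exists_start_subset_Icc_sub_add {r d p x : ℝ} (hx : x ∈ Icc r d) (hp : 0 ≤ p)
    (hrd : r + p ≤ d) :
    ∃ t, r ≤ t ∧ t + p ≤ d ∧ Icc t (t + p) ⊆ Icc (x - p) (x + p) := by
  refine ⟨max r (x - p), le_max_left _ _, ?_, Icc_subset_Icc (le_max_right _ _) ?_⟩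
  · rw [← max_add_add_right]
    exact max_le hrd (by linarith [hx.2])
  · linarith [max_le hx.1 (by linarith : x - p ≤ x)]

lemma exists_dyadic_scale {a p : ℝ} {n : ℕ} (hp : 0 < p) (hpa : p ≤ a) (han : a < n * p) :
    ∃ k ≤ Nat.log 2 n, a / 2 ^ (k + 1) < p ∧ p ≤ a / 2 ^ k := by
  obtain ⟨k, hk, hk'⟩ := exists_nat_pow_near ((one_le_div hp).2 hpa) one_lt_two
  rw [le_div_iff₀ hp] at hk
  rw [div_lt_iff₀ hp] at hk'
  have h2k : 2 ^ k ≤ n := by exact_mod_cast (le_of_mul_le_mul_right (hk.trans han.le) hp)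
  refine ⟨k, Nat.le_log_of_pow_le one_lt_two h2k, ?_, ?_⟩
  · rw [div_lt_iff₀ (by positivity)]; linarith
  · rw [le_div_iff₀ (by positivity)]; linarith

lemma volume_biUnion_Icc_le {ι : Type*} (s : Finset ι) (x : ι → ℝ) (δ : ℝ) :
    volume (⋃ i ∈ s, Icc (x i - δ) (x i + δ)) ≤ s.card * ENNReal.ofReal (2 * δ) := by
  refine (measure_biUnion_finset_le _ _).trans ?_
  rw [← nsmul_eq_mul]
  refine Finset.sum_le_card_nsmul _ _ _ fun i _ => ?_
  rw [Real.volume_Icc]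
  exact le_of_eq (congrArg ENNReal.ofReal (by ring))

noncomputable def gridPoint (F : ℝ → ℝ) (a : ℝ) (k m : ℕ) : ℝ :=
  sInf {z | m * (a / 2 ^ (k + 1)) ≤ F z}

noncomputable def gridCover (F : ℝ → ℝ) (a : ℝ) (K : ℕ) : Set ℝ :=
  ⋃ k ∈ Finset.range (K + 1), ⋃ m ∈ Finset.range (2 ^ (k + 1) + 1),
    Icc (gridPoint F a k m - a / 2 ^ k) (gridPoint F a k m + a / 2 ^ k)

lemma volume_gridCover_le (F : ℝ → ℝ) {a : ℝ} (ha : 0 ≤ a) (K : ℕ) :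
    volume (gridCover F a K) ≤ ENNReal.ofReal (6 * a * (K + 1)) := by
  have hlevel : ∀ k : ℕ, ((2 ^ (k + 1) + 1 : ℕ) : ℝ≥0∞) * ENNReal.ofReal (2 * (a / 2 ^ k))
      ≤ ENNReal.ofReal (6 * a) := by
    intro k
    rw [← ENNReal.ofReal_natCast, ← ENNReal.ofReal_mul (by positivity)]
    refine ENNReal.ofReal_le_ofReal ?_
    have h2k : (1 : ℝ) ≤ 2 ^ k := one_le_pow₀ one_le_two
    have : a / 2 ^ k ≤ a := div_le_self ha h2k
    calc ((2 ^ (k + 1) + 1 : ℕ) : ℝ) * (2 * (a / 2 ^ k)) = 4 * a + 2 * (a / 2 ^ k) := by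
          push_cast; field_simp; ring
      _ ≤ 6 * a := by linarith
  calc volume (gridCover F a K)
      ≤ ∑ k ∈ Finset.range (K + 1), volume (⋃ m ∈ Finset.range (2 ^ (k + 1) + 1),
          Icc (gridPoint F a k m - a / 2 ^ k) (gridPoint F a k m + a / 2 ^ k)) :=
        measure_biUnion_finset_le _ _
    _ ≤ ∑ _k ∈ Finset.range (K + 1), ENNReal.ofReal (6 * a) := by
        refine Finset.sum_le_sum fun k _ => (volume_biUnion_Icc_le _ _ _).trans ?_
        simpa using hlevel k
    _ = ENNReal.ofReal (6 * a * (K + 1)) := by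
        rw [Finset.sum_const, Finset.card_range, nsmul_eq_mul, ← ENNReal.ofReal_natCast,
          ← ENNReal.ofReal_mul (by positivity)]
        push_cast
        ring_nf

lemma exists_start_subset_gridCover {F : ℝ → ℝ} (hF : Monotone F) (hF₀ : ∀ x, 0 ≤ F x)
    {a : ℝ} (hFa : ∀ x, F x ≤ a) {n : ℕ} {r d p : ℝ} (hrd : r + p ≤ d) (hjob : F r + p ≤ F d)
    (hp : 0 < p) (hpa : p ≤ a) (han : a < n * p) :
    ∃ t, r ≤ t ∧ t + p ≤ d ∧ Icc t (t + p) ⊆ gridCover F a (Nat.log 2 n) := by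
  have ha : 0 < a := hp.trans_le hpa
  obtain ⟨k, hkK, hq, hpk⟩ := exists_dyadic_scale hp hpa han
  obtain ⟨m, hmF, hx⟩ := exists_nat_mul_le_csInf_mem_Icc hF (q := a / 2 ^ (k + 1))
    (by positivity) (hF₀ r) ((add_le_add_right hq.le _).trans hjob)
  have hm : m < 2 ^ (k + 1) + 1 := by
    have h := hmF.trans (hFa d)
    rw [mul_div_assoc', div_le_iff₀ (by positivity), mul_comm a] at h
    have : (m : ℝ) < 2 ^ (k + 1) + 1 := by linarith [le_of_mul_le_mul_right h ha]
    exact_mod_cast this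
  obtain ⟨t, hrt, htd, ht⟩ := exists_start_subset_Icc_sub_add hx hp.le hrd
  refine ⟨t, hrt, htd, ht.trans ?_⟩
  refine subset_trans ?_ (subset_biUnion_of_mem (Finset.mem_range.2 (Nat.lt_succ_of_le hkK)))
  refine subset_trans ?_ (subset_biUnion_of_mem (u := fun m => Icc (gridPoint F a k m - a / 2 ^ k)
    (gridPoint F a k m + a / 2 ^ k)) (Finset.mem_range.2 hm))
  exact Icc_subset_Icc (by unfold gridPoint; linarith) (by unfold gridPoint; linarith)

lemma volume_iUnion_Icc_min_le {ι : Type*} [Fintype ι] (r p : ι → ℝ) (b : ℝ) :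
    volume (⋃ i, Icc (r i) (r i + min (p i) b)) ≤ ENNReal.ofReal (Fintype.card ι * b) := by
  refine (measure_iUnion_fintype_le _ _).trans ?_
  calc ∑ i, volume (Icc (r i) (r i + min (p i) b))
      ≤ ∑ _i : ι, ENNReal.ofReal b := Finset.sum_le_sum fun i _ => by
        rw [Real.volume_Icc, add_sub_cancel_left]
        exact ENNReal.ofReal_le_ofReal (min_le_right _ _)
    _ = ENNReal.ofReal (Fintype.card ι * b) := by
        rw [Finset.sum_const, Finset.card_univ, nsmul_eq_mul, ← ENNReal.ofReal_natCast,
          ENNReal.ofReal_mul (Nat.cast_nonneg _)]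

lemma exists_start_subset_cover {U : Set ℝ} (hU : volume U ≠ ∞) {r d p : ℝ} {S : Set ℝ}
    (hSU : S ⊆ U) (hS : S ⊆ Icc r d) (hSp : volume S = ENNReal.ofReal p) (hrd : r + p ≤ d)
    {n : ℕ} (hn : 0 < n) :
    ∃ t, r ≤ t ∧ t + p ≤ d ∧ Icc t (t + p) ⊆ Icc r (r + min p ((volume U).toReal / n)) ∪
      gridCover (cumulativeVolume U) (volume U).toReal (Nat.log 2 n) := by
  set a := (volume U).toReal
  by_cases hsmall : p ≤ a / n
  · exact ⟨r, le_rfl, hrd, subset_union_of_subset_left (by rw [min_eq_left hsmall]) _⟩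
  have hn' : (0 : ℝ) < n := by exact_mod_cast hn
  rw [not_le, div_lt_iff₀ hn', mul_comm] at hsmall
  have hp : 0 < p := pos_of_mul_pos_right (ENNReal.toReal_nonneg.trans_lt hsmall) hn'.le
  have hp_le : p ≤ (volume S).toReal := by
    rw [hSp, ENNReal.toReal_ofReal hp.le]
  have hjob : cumulativeVolume U r + p ≤ cumulativeVolume U d :=
    (add_le_add_right hp_le _).trans
      (cumulativeVolume_add_le hU (by linarith) fun z hz => ⟨hSU hz, hS hz⟩)
  obtain ⟨t, hrt, htd, ht⟩ := exists_start_subset_gridCover (cumulativeVolume_mono hU)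
    cumulativeVolume_nonneg (cumulativeVolume_le hU) hrd hjob hp
    (hp_le.trans (ENNReal.toReal_mono hU (measure_mono hSU))) hsmall
  exact ⟨t, hrt, htd, subset_union_of_subset_right ht _⟩

theorem exists_pathNPFeasible_npBusy_le {ι : Type*} [Fintype ι] (r d p : ι → ℝ)
    (hrd : ∀ i, r i + p i ≤ d i) (S : ι → Set ℝ) (hS : PathPFeasible r d p S) :
    ∃ s, PathNPFeasible r d p s ∧
      npBusy p s ≤ ENNReal.ofReal (7 + 6 * Nat.log 2 (Fintype.card ι)) * pBusy S := by
  set n := Fintype.card ι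
  set U := ⋃ i, S i
  have hU : volume U ≠ ∞ := (Bornology.IsBounded.measure_lt_top (Bornology.isBounded_iUnion.2
    fun i => (Metric.isBounded_Icc (r i) (d i)).subset (hS i).2.1)).ne
  set a := (volume U).toReal
  set small := ⋃ i, Icc (r i) (r i + min (p i) (a / n))
  have hcover : ∀ i, ∃ t, r i ≤ t ∧ t + p i ≤ d i ∧
      Icc t (t + p i) ⊆ small ∪ gridCover (cumulativeVolume U) a (Nat.log 2 n) := fun i => by
    obtain ⟨t, hrt, htd, ht⟩ := exists_start_subset_cover hU (subset_iUnion S i) (hS i).2.1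
      (hS i).2.2 (hrd i) (Fintype.card_pos_iff.2 ⟨i⟩)
    exact ⟨t, hrt, htd, ht.trans (union_subset_union_left _ (subset_iUnion
      (fun j => Icc (r j) (r j + min (p j) (a / n))) i))⟩
  choose s hs using hcover
  have ha : 0 ≤ a := ENNReal.toReal_nonneg
  have hna : (n : ℝ) * (a / n) ≤ a := by
    rcases eq_or_ne (n : ℝ) 0 with h | h
    · simpa [h] using ha
    · rw [mul_div_cancel₀ _ h]
  refine ⟨s, fun i => ⟨(hs i).1, (hs i).2.1⟩, ?_⟩
  calc npBusy p s ≤ volume (small ∪ gridCover (cumulativeVolume U) a (Nat.log 2 n)) :=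
        measure_mono (iUnion_subset fun i => (hs i).2.2)
    _ ≤ ENNReal.ofReal (n * (a / n)) + ENNReal.ofReal (6 * a * (Nat.log 2 n + 1)) :=
        (measure_union_le _ _).trans
          (add_le_add (volume_iUnion_Icc_min_le _ _ _) (volume_gridCover_le _ ha _))
    _ ≤ ENNReal.ofReal ((7 + 6 * Nat.log 2 n) * a) := by
        rw [← ENNReal.ofReal_add (by positivity) (by positivity)]
        exact ENNReal.ofReal_le_ofReal (by linarith)
    _ = ENNReal.ofReal (7 + 6 * Nat.log 2 n) * pBusy S := by
        rw [ENNReal.ofReal_mul (by positivity), ENNReal.ofReal_toReal hU]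
        rfl

section Windows

variable {N : ℝ}

lemma disjoint_Ioo_div (hN : 0 < N) {q q' : ℕ} (hne : q ≠ q') :
    Disjoint (Ioo (q / N) ((q + 1) / N)) (Ioo (q' / N) ((q' + 1) / N)) := by
  wlog h : q < q' generalizing q q'
  · exact (this hne.symm (lt_of_le_of_ne (not_lt.1 h) hne.symm)).symm
  refine Set.disjoint_left.2 fun z hz hz' => ?_
  have : ((q : ℝ) + 1) / N ≤ q' / N := by gcongr; exact_mod_cast h
  linarith [hz.2, hz'.1]

lemma volume_biUnion_eq_sum_of_subset_Ioo (hN : 0 < N) (s : Finset ℕ) {I : ℕ → Set ℝ}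
    (hmeas : ∀ q ∈ s, MeasurableSet (I q)) (hI : ∀ q ∈ s, I q ⊆ Ioo (q / N) ((q + 1) / N)) :
    volume (⋃ q ∈ s, I q) = ∑ q ∈ s, volume (I q) :=
  measure_biUnion_finset (fun q hq q' hq' hne =>
    (disjoint_Ioo_div hN hne).mono (hI q hq) (hI q' hq')) hmeas

lemma card_le_of_forall_mem_Icc (s : Finset ℕ) {x y : ℝ} (hxy : x ≤ y)
    (h : ∀ q ∈ s, x ≤ q ∧ (q : ℝ) ≤ y) : (s.card : ℝ) ≤ y - x + 1 := by
  rcases lt_or_ge y 0 with hy | hy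
  · have : s = ∅ := Finset.eq_empty_of_forall_notMem fun q hq =>
      (Nat.cast_nonneg q).not_gt ((h q hq).2.trans_lt hy)
    simp [this]
    linarith
  have hsub : s ⊆ Finset.Icc ⌈x⌉₊ ⌊y⌋₊ := fun q hq =>
    Finset.mem_Icc.2 ⟨Nat.ceil_le.2 (h q hq).1, Nat.le_floor (h q hq).2⟩
  have hcard : s.card + ⌈x⌉₊ ≤ ⌊y⌋₊ + 1 := by
    have := Finset.card_le_card hsub
    rw [Nat.card_Icc] at this
    have := (Nat.ceil_mono hxy).trans (Nat.ceil_le_floor_add_one y)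
    omega
  have : ((s.card + ⌈x⌉₊ : ℕ) : ℝ) ≤ ((⌊y⌋₊ + 1 : ℕ) : ℝ) := by exact_mod_cast hcard
  push_cast at this
  linarith [Nat.le_ceil x, Nat.floor_le hy]

lemma volume_biUnion_inter_Icc_le (hN : 0 < N) (s : Finset ℕ) {I : ℕ → Set ℝ} {δ : ℝ} (hδ₀ : 0 ≤ δ)
    (hI : ∀ q ∈ s, I q ⊆ Icc (q / N) ((q + 1) / N)) (hδ : ∀ q ∈ s, volume (I q) ≤ ENNReal.ofReal δ)
    {α β : ℝ} (hαβ : α ≤ β) :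
    volume ((⋃ q ∈ s, I q) ∩ Icc α β) ≤ ENNReal.ofReal (((β - α) * N + 2) * δ) := by
  classical
  set s' := s.filter fun q : ℕ => α * N - 1 ≤ q ∧ (q : ℝ) ≤ β * N
  have hmeet : ∀ q ∈ s, volume (I q ∩ Icc α β) ≠ 0 → α * N - 1 ≤ q ∧ (q : ℝ) ≤ β * N := by
    intro q hq hne
    obtain ⟨z, hzI, hzJ⟩ := nonempty_of_measure_ne_zero hne
    have hz := hI q hq hzI
    rw [mem_Icc, div_le_iff₀ hN, le_div_iff₀ hN] at hz
    constructor <;> nlinarith [hzJ.1, hzJ.2]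
  have hcard : (s'.card : ℝ) ≤ (β - α) * N + 2 := by
    have := card_le_of_forall_mem_Icc s' (by nlinarith : α * N - 1 ≤ β * N)
      fun q hq => (Finset.mem_filter.1 hq).2
    linarith
  rw [iUnion₂_inter]
  calc volume (⋃ q ∈ s, I q ∩ Icc α β) ≤ ∑ q ∈ s, volume (I q ∩ Icc α β) :=
        measure_biUnion_finset_le _ _
    _ = ∑ q ∈ s', volume (I q ∩ Icc α β) := (Finset.sum_filter_of_ne hmeet).symm
    _ ≤ s'.card • ENNReal.ofReal δ := Finset.sum_le_card_nsmul _ _ _ fun q hq =>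
        (measure_mono inter_subset_left).trans (hδ q (Finset.mem_filter.1 hq).1)
    _ ≤ ENNReal.ofReal (((β - α) * N + 2) * δ) := by
        rw [nsmul_eq_mul, ← ENNReal.ofReal_natCast, ← ENNReal.ofReal_mul (Nat.cast_nonneg _)]
        exact ENNReal.ofReal_le_ofReal (mul_le_mul_of_nonneg_right hcard hδ₀)

end Windows

lemma measure_le_measure_diff_biUnion_add_sum {α ι : Type*} [MeasurableSpace α] (μ : Measure α)
    (A : Set α) (s : Finset ι) (B : ι → Set α) :
    μ A ≤ μ (A \ ⋃ i ∈ s, B i) + ∑ i ∈ s, μ (A ∩ B i) :=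
  calc μ A ≤ μ ((A \ ⋃ i ∈ s, B i) ∪ ⋃ i ∈ s, A ∩ B i) := measure_mono fun z hz => by
        by_cases h : z ∈ ⋃ i ∈ s, B i
        · obtain ⟨i, hi, hzi⟩ := mem_iUnion₂.1 h
          exact Or.inr (mem_iUnion₂.2 ⟨i, hi, hz, hzi⟩)
        · exact Or.inl ⟨hz, h⟩
    _ ≤ μ (A \ ⋃ i ∈ s, B i) + ∑ i ∈ s, μ (A ∩ B i) :=
        (measure_union_le _ _).trans (add_le_add_right (measure_biUnion_finset_le _ _) _)

lemma natCast_mul_le_measure_biUnion_range {α : Type*} [MeasurableSpace α] {μ : Measure α}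
    {A : ℕ → Set α} (hA : ∀ t, MeasurableSet (A t)) {δ : ℝ≥0∞} {T : ℕ}
    (h : ∀ t < T, δ ≤ μ (A t \ ⋃ s ∈ Finset.range t, A s)) :
    T * δ ≤ μ (⋃ t ∈ Finset.range T, A t) := by
  induction T with
  | zero => simp
  | succ T ih =>
    have hU : MeasurableSet (⋃ s ∈ Finset.range T, A s) :=
      Finset.measurableSet_biUnion _ fun s _ => hA s
    rw [Finset.range_add_one, Finset.set_biUnion_insert, union_comm, ← union_sdiff_self,
      measure_union disjoint_sdiff_right ((hA T).diff hU), Nat.cast_add_one, add_mul, one_mul]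
    exact add_le_add (ih fun t ht => h t (Nat.lt_succ_of_lt ht)) (h T (Nat.lt_succ_self T))

-- Open intervals, so that the jobs of one level, lying in distinct windows, are disjoint.
noncomputable def layer (ε : ℝ) (x : ℕ → ℕ → ℝ) (t : ℕ) : Set ℝ :=
  ⋃ j ∈ Finset.range (4 ^ t), Ioo (x t j) (x t j + ε / 4 ^ t)

def FitsLayer (ε : ℝ) (x : ℕ → ℕ → ℝ) (t : ℕ) : Prop :=
  ∀ j : ℕ, j < 4 ^ t → (j : ℝ) / 4 ^ t ≤ x t j ∧ x t j + ε / 4 ^ t ≤ (j + 1) / 4 ^ t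

section Layers

variable {ε : ℝ} {x : ℕ → ℕ → ℝ}

lemma measurableSet_layer (t : ℕ) : MeasurableSet (layer ε x t) :=
  Finset.measurableSet_biUnion _ fun _ _ => measurableSet_Ioo

lemma volume_layer {t : ℕ} (hx : FitsLayer ε x t) :
    volume (layer ε x t) = ENNReal.ofReal ε := by
  rw [layer, volume_biUnion_eq_sum_of_subset_Ioo (N := 4 ^ t) (by positivity) _
    (fun _ _ => measurableSet_Ioo) fun j hj =>
      Ioo_subset_Ioo (hx j (Finset.mem_range.1 hj)).1 (hx j (Finset.mem_range.1 hj)).2]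
  simp only [Real.volume_Ioo, add_sub_cancel_left, Finset.sum_const, Finset.card_range,
    nsmul_eq_mul]
  rw [← ENNReal.ofReal_natCast, ← ENNReal.ofReal_mul (Nat.cast_nonneg _)]
  push_cast
  field_simp

lemma volume_layer_inter_layer_le {t : ℕ} (hε : 0 ≤ ε) (hx : FitsLayer ε x t) (s : ℕ) :
    volume (layer ε x t ∩ layer ε x s) ≤ ENNReal.ofReal (ε ^ 2 + 2 * ε * 4 ^ s / 4 ^ t) := by
  have hwindow : ∀ j ∈ Finset.range (4 ^ t), Ioo (x t j) (x t j + ε / 4 ^ t) ⊆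
      Icc ((j : ℝ) / 4 ^ t) ((j + 1) / 4 ^ t) := fun j hj =>
    Ioo_subset_Icc_self.trans
      (Icc_subset_Icc (hx j (Finset.mem_range.1 hj)).1 (hx j (Finset.mem_range.1 hj)).2)
  have hpiece : ∀ j ∈ Finset.range (4 ^ s),
      volume (layer ε x t ∩ Ioo (x s j) (x s j + ε / 4 ^ s))
        ≤ ENNReal.ofReal ((ε / 4 ^ s * 4 ^ t + 2) * (ε / 4 ^ t)) := fun j _ => by
    refine (measure_mono (inter_subset_inter_right _ Ioo_subset_Icc_self)).trans ?_
    have h := volume_biUnion_inter_Icc_le (N := 4 ^ t) (δ := ε / 4 ^ t) (by positivity) _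
      (by positivity) hwindow (fun _ _ => by rw [Real.volume_Ioo, add_sub_cancel_left])
      (le_add_of_nonneg_right (by positivity : 0 ≤ ε / 4 ^ s) : x s j ≤ _)
    rwa [add_sub_cancel_left] at h
  rw [show layer ε x s = ⋃ j ∈ Finset.range (4 ^ s), Ioo (x s j) (x s j + ε / 4 ^ s) from rfl,
    inter_iUnion₂]
  refine (measure_biUnion_finset_le _ _).trans ((Finset.sum_le_card_nsmul _ _ _ hpiece).trans ?_)
  rw [Finset.card_range, nsmul_eq_mul, ← ENNReal.ofReal_natCast,
    ← ENNReal.ofReal_mul (Nat.cast_nonneg _)]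
  refine le_of_eq (congrArg ENNReal.ofReal ?_)
  push_cast
  field_simp

lemma ofReal_le_volume_layer_diff {t : ℕ} (hε : 0 ≤ ε) (ht : t * ε ≤ 1 / 6)
    (hx : FitsLayer ε x t) :
    ENNReal.ofReal (ε / 6) ≤ volume (layer ε x t \ ⋃ s ∈ Finset.range t, layer ε x s) := by
  have hsum : ∑ s ∈ Finset.range t, (ε ^ 2 + 2 * ε * 4 ^ s / 4 ^ t) ≤ 5 * ε / 6 := by
    have hgeom := geom_sum_mul_add (3 : ℝ) t
    norm_num at hgeom
    have h4 : (0 : ℝ) < 4 ^ t := by positivity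
    have hfar : ∑ s ∈ Finset.range t, 2 * ε * 4 ^ s / 4 ^ t ≤ 2 * ε / 3 := by
      rw [← Finset.sum_div, ← Finset.mul_sum, div_le_iff₀ h4]
      nlinarith
    rw [Finset.sum_add_distrib, Finset.sum_const, Finset.card_range, nsmul_eq_mul]
    nlinarith
  have hoverlap : ∑ s ∈ Finset.range t, volume (layer ε x t ∩ layer ε x s)
      ≤ ENNReal.ofReal (5 * ε / 6) := by
    refine (Finset.sum_le_sum fun s _ => volume_layer_inter_layer_le hε hx s).trans ?_
    rw [← ENNReal.ofReal_sum_of_nonneg fun s _ => by positivity]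
    exact ENNReal.ofReal_le_ofReal hsum
  refine ENNReal.le_of_add_le_add_right ENNReal.ofReal_ne_top
    (le_trans ?_ ((measure_le_measure_diff_biUnion_add_sum volume _ _ _).trans
      (add_le_add le_rfl hoverlap)))
  rw [volume_layer hx, ← ENNReal.ofReal_add (by positivity) (by positivity)]
  exact ENNReal.ofReal_le_ofReal (by linarith)

lemma ofReal_le_volume_biUnion_layer {T : ℕ} (hε : 0 ≤ ε) (hT : T * ε ≤ 1 / 6)
    (hx : ∀ t < T, FitsLayer ε x t) :
    ENNReal.ofReal (T * ε / 6) ≤ volume (⋃ t ∈ Finset.range T, layer ε x t) := by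
  have h := natCast_mul_le_measure_biUnion_range (μ := volume) measurableSet_layer
    fun t ht => ofReal_le_volume_layer_diff hε
      (le_trans (by gcongr) hT) (hx t ht)
  rwa [← ENNReal.ofReal_natCast, ← ENNReal.ofReal_mul (Nat.cast_nonneg _), ← mul_div_assoc] at h

end Layers

def IsPreemptionGap {ι : Type*} (r d p : ι → ℝ) (P B : ℝ) : Prop :=
  (∀ i, 0 ≤ p i) ∧ (∀ i, r i + p i ≤ d i) ∧
    (∃ S : ι → Set ℝ, PathPFeasible r d p S ∧ pBusy S = ENNReal.ofReal P) ∧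
    ∀ s : ι → ℝ, PathNPFeasible r d p s → ENNReal.ofReal B ≤ npBusy p s

namespace IsPreemptionGap

variable {ι κ : Type*} {r d p : ι → ℝ} {P B : ℝ}

lemma mono (h : IsPreemptionGap r d p P B) {B' : ℝ} (hB : B' ≤ B) :
    IsPreemptionGap r d p P B' :=
  ⟨h.1, h.2.1, h.2.2.1, fun s hs => (ENNReal.ofReal_le_ofReal hB).trans (h.2.2.2 s hs)⟩

lemma extend (h : IsPreemptionGap r d p P B) (e : ι ↪ κ) :
    IsPreemptionGap (Function.extend e r 0) (Function.extend e d 0) (Function.extend e p 0)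
      P B := by
  obtain ⟨hp, hrd, ⟨S, hS, hSP⟩, hlow⟩ := h
  have he := e.injective
  refine ⟨fun k => ?_, fun k => ?_, ⟨Function.extend e S fun _ => ∅, fun k => ?_, ?_⟩,
    fun s hs => ?_⟩
  · rcases em (∃ i, e i = k) with ⟨i, rfl⟩ | hk
    · simpa only [he.extend_apply] using hp i
    · simp [Function.extend_apply' _ _ _ hk]
  · rcases em (∃ i, e i = k) with ⟨i, rfl⟩ | hk
    · simpa only [he.extend_apply] using hrd i
    · simp [Function.extend_apply' _ _ _ hk]
  · rcases em (∃ i, e i = k) with ⟨i, rfl⟩ | hk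
    · simpa only [he.extend_apply] using hS i
    · simp [Function.extend_apply' _ _ _ hk]
  · rw [← hSP]
    refine congrArg volume (subset_antisymm (iUnion_subset fun k => ?_) (iUnion_subset fun i => ?_))
    · rcases em (∃ i, e i = k) with ⟨i, rfl⟩ | hk
      · simpa only [he.extend_apply] using subset_iUnion S i
      · simp [Function.extend_apply' _ _ _ hk]
    · simpa only [he.extend_apply] using subset_iUnion (Function.extend e S fun _ => ∅) (e i)
  · refine (hlow (s ∘ e) fun i => ?_).trans (measure_mono (iUnion_subset fun i => ?_))
    · simpa only [Function.comp_apply, he.extend_apply] using hs (e i)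
    · simpa only [Function.comp_apply, he.extend_apply] using
        subset_iUnion (fun k => Icc (s k) (s k + Function.extend e p 0 k)) (e i)

end IsPreemptionGap

lemma volume_biUnion_Ioo_div {N ε : ℝ} (hN : 0 < N) (hε : ε ≤ 1) (s : Finset ℕ) :
    volume (⋃ q ∈ s, Ioo ((q : ℝ) / N) ((q + ε) / N)) = s.card * ENNReal.ofReal (ε / N) := by
  rw [volume_biUnion_eq_sum_of_subset_Ioo hN s (fun _ _ => measurableSet_Ioo)
    fun q _ => Ioo_subset_Ioo le_rfl (by gcongr),
    Finset.sum_congr rfl fun q _ => by rw [Real.volume_Ioo, ← sub_div, add_sub_cancel_left],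
    Finset.sum_const, nsmul_eq_mul]

abbrev LayeredJob (T : ℕ) := Σ t : Fin T, Fin (4 ^ (t : ℕ))

namespace LayeredJob

variable {T : ℕ}

lemma card_mul_three_add_one (T : ℕ) : Fintype.card (LayeredJob T) * 3 + 1 = 4 ^ T := by
  simp only [Fintype.card_sigma, Fintype.card_fin, Fin.sum_univ_eq_sum_range (fun t => 4 ^ t)]
  exact geom_sum_mul_add 3 T

noncomputable def release (x : LayeredJob T) : ℝ := (x.2 : ℕ) / 4 ^ (x.1 : ℕ)

noncomputable def deadline (x : LayeredJob T) : ℝ := ((x.2 : ℕ) + 1) / 4 ^ (x.1 : ℕ)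

noncomputable def proc (ε : ℝ) (x : LayeredJob T) : ℝ := ε / 4 ^ (x.1 : ℕ)

noncomputable def cells (ε : ℝ) (x : LayeredJob T) : Set ℝ :=
  ⋃ q ∈ Finset.Ico ((x.2 : ℕ) * 4 ^ (T - x.1)) (((x.2 : ℕ) + 1) * 4 ^ (T - x.1)),
    Ioo ((q : ℝ) / 4 ^ T) ((q + ε) / 4 ^ T)

lemma mul_four_pow_sub_div {t : ℕ} (ht : t ≤ T) (a : ℝ) : a * 4 ^ (T - t) / 4 ^ T = a / 4 ^ t := by
  rw [← pow_sub_mul_pow (4 : ℝ) ht]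
  field_simp

variable {ε : ℝ}

lemma cells_subset (hε : ε ≤ 1) (x : LayeredJob T) : cells ε x ⊆ Icc (release x) (deadline x) := by
  refine iUnion₂_subset fun q hq => Ioo_subset_Icc_self.trans (Icc_subset_Icc ?_ ?_)
  all_goals
    rw [Finset.mem_Ico] at hq
    simp only [release, deadline]
    rw [← mul_four_pow_sub_div x.1.isLt.le]
    gcongr
  · exact_mod_cast hq.1
  · calc (q : ℝ) + ε ≤ q + 1 := by linarith
      _ ≤ _ := by exact_mod_cast hq.2

lemma volume_cells (hε : ε ≤ 1) (x : LayeredJob T) :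
    volume (cells ε x) = ENNReal.ofReal (proc ε x) := by
  rw [cells, volume_biUnion_Ioo_div (by positivity) hε, Nat.card_Ico, add_one_mul,
    Nat.add_sub_cancel_left, ← ENNReal.ofReal_natCast, ← ENNReal.ofReal_mul (Nat.cast_nonneg _),
    proc, ← mul_four_pow_sub_div x.1.isLt.le]
  push_cast
  ring_nf

lemma iUnion_cells (hT : 0 < T) :
    ⋃ x : LayeredJob T, cells ε x =
      ⋃ q ∈ Finset.range (4 ^ T), Ioo ((q : ℝ) / 4 ^ T) ((q + ε) / 4 ^ T) := by
  refine subset_antisymm (iUnion_subset fun x => iUnion₂_subset fun q hq => ?_) ?_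
  · refine subset_biUnion_of_mem (u := fun q : ℕ => Ioo ((q : ℝ) / 4 ^ T) ((q + ε) / 4 ^ T)) ?_
    rw [Finset.mem_Ico] at hq
    refine Finset.mem_coe.2 (Finset.mem_range.2 ?_)
    calc q < ((x.2 : ℕ) + 1) * 4 ^ (T - x.1) := hq.2
      _ ≤ 4 ^ (x.1 : ℕ) * 4 ^ (T - x.1) := Nat.mul_le_mul_right _ x.2.isLt
      _ = 4 ^ T := by rw [← pow_add, Nat.add_sub_cancel' x.1.isLt.le]
  · refine subset_trans (Eq.subset ?_) (subset_iUnion (cells ε) ⟨⟨0, hT⟩, ⟨0, by simp⟩⟩)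
    simp only [cells, zero_mul, zero_add, one_mul, Nat.sub_zero, Finset.range_eq_Ico]

theorem isPreemptionGap (hT : 0 < T) (hε₀ : 0 ≤ ε) (hε₁ : ε ≤ 1) (hεT : T * ε ≤ 1 / 6) :
    IsPreemptionGap (release (T := T)) deadline (proc ε) ε (T * ε / 6) := by
  refine ⟨fun x => by unfold proc; positivity, fun x => ?_, ⟨cells ε, fun x =>
    ⟨Finset.measurableSet_biUnion _ fun _ _ => measurableSet_Ioo, cells_subset hε₁ x,
      volume_cells hε₁ x⟩, ?_⟩, fun s hs => ?_⟩
  · rw [release, deadline, proc, ← add_div]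
    gcongr
  · rw [pBusy, iUnion_cells hT, volume_biUnion_Ioo_div (by positivity) hε₁, Finset.card_range,
      ← ENNReal.ofReal_natCast, ← ENNReal.ofReal_mul (Nat.cast_nonneg _)]
    push_cast
    field_simp
  set y : ℕ → ℕ → ℝ := fun t j => if h : t < T ∧ j < 4 ^ t then s ⟨⟨t, h.1⟩, ⟨j, h.2⟩⟩ else 0
  have hy : ∀ t (ht : t < T) j (hj : j < 4 ^ t), y t j = s ⟨⟨t, ht⟩, ⟨j, hj⟩⟩ :=
    fun t ht j hj => dif_pos ⟨ht, hj⟩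
  have hfit : ∀ t < T, FitsLayer ε y t := fun t ht j hj => by
    rw [hy t ht j hj]
    exact hs ⟨⟨t, ht⟩, ⟨j, hj⟩⟩
  refine (ofReal_le_volume_biUnion_layer hε₀ hεT hfit).trans (measure_mono ?_)
  refine iUnion₂_subset fun t ht => iUnion₂_subset fun j hj => ?_
  rw [Finset.mem_range] at ht hj
  rw [hy t ht j hj]
  exact Ioo_subset_Icc_self.trans
    (subset_iUnion (fun x => Icc (s x) (s x + proc ε x)) ⟨⟨t, ht⟩, ⟨j, hj⟩⟩)

end LayeredJob

lemma log_le_three_mul {n T : ℕ} (hT : 1 ≤ T) (hn : n < 4 ^ (T + 1)) : Real.log n ≤ 3 * T := by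
  rcases Nat.eq_zero_or_pos n with rfl | hn₀
  · simp
  have hlog4 : Real.log 4 < 1.3863 := by
    rw [show (4 : ℝ) = 2 ^ 2 by norm_num, Real.log_pow]
    linarith [Real.log_two_lt_d9]
  have hT' : (1 : ℝ) ≤ T := by exact_mod_cast hT
  calc Real.log n ≤ Real.log (4 ^ (T + 1)) :=
        Real.log_le_log (by exact_mod_cast hn₀) (by exact_mod_cast hn.le)
    _ = (T + 1) * Real.log 4 := by rw [Real.log_pow]; push_cast; ring
    _ ≤ 3 * T := by nlinarith [Real.log_nonneg (by norm_num : (1 : ℝ) ≤ 4)]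

theorem exists_isPreemptionGap (n : ℕ) (hn : 1 ≤ n) :
    ∃ (r d p : Fin n → ℝ) (P : ℝ), 0 < P ∧ IsPreemptionGap r d p P (1 / 20 * P * Real.log n) := by
  set T := Nat.log 4 (3 * n + 1)
  have hT : 0 < T := Nat.log_pos (by norm_num) (by omega)
  have hcard : Fintype.card (LayeredJob T) ≤ Fintype.card (Fin n) := by
    have := Nat.pow_log_le_self 4 (show 3 * n + 1 ≠ 0 by omega)
    rw [Fintype.card_fin]
    linarith [LayeredJob.card_mul_three_add_one T]
  obtain ⟨e⟩ := Function.Embedding.nonempty_of_card_le hcard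
  have hT' : (1 : ℝ) ≤ T := by exact_mod_cast hT
  set ε : ℝ := 1 / (6 * T)
  have hεT : T * ε = 1 / 6 := by simp only [ε]; field_simp
  refine ⟨_, _, _, ε, by positivity, ((LayeredJob.isPreemptionGap hT (by positivity)
    (by rw [div_le_one (by positivity)]; linarith) hεT.le).mono ?_).extend e⟩
  have hlog := log_le_three_mul hT (n := n)
    ((Nat.lt_pow_succ_log_self (by norm_num) (3 * n + 1)).trans_le' (by omega))
  nlinarith [show 0 < ε by positivity]

lemma seven_add_six_mul_log_le {n : ℕ} (hn : 2 ≤ n) :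
    7 + 6 * (Nat.log 2 n : ℝ) ≤ 20 * Real.log n := by
  have hlog2 := Real.log_two_gt_d9
  have hK : Nat.log 2 n * Real.log 2 ≤ Real.log n := by
    rw [← Real.log_pow]
    exact Real.log_le_log (by positivity) (by exact_mod_cast Nat.pow_log_le_self 2 (by omega))
  have hn2 : Real.log 2 ≤ Real.log n := Real.log_le_log two_pos (by exact_mod_cast hn)
  have hK0 : (0 : ℝ) ≤ Nat.log 2 n := Nat.cast_nonneg _
  nlinarith

theorem power_of_preemption_theta :
    ∃ c₁ c₂ : ℝ, 0 < c₁ ∧ 0 < c₂ ∧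
      (∀ (n : ℕ), 2 ≤ n → ∀ r d p : Fin n → ℝ,
        (∀ i, 0 ≤ p i) → (∀ i, r i + p i ≤ d i) →
        ∀ S : Fin n → Set ℝ, PathPFeasible r d p S →
        ∀ a : ℝ, pBusy S = ENNReal.ofReal a →
        ∃ s : Fin n → ℝ, PathNPFeasible r d p s ∧
          npBusy p s ≤ ENNReal.ofReal (c₁ * a * Real.log n)) ∧
      (∀ ℓ : ℕ, 2 ≤ ℓ →
        ∃ (r d p : Fin (ℓ * (ℓ + 1) / 2) → ℝ) (P : ℝ), 0 < P ∧
          (∀ i, 0 ≤ p i) ∧ (∀ i, r i + p i ≤ d i) ∧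
          (∃ S : Fin (ℓ * (ℓ + 1) / 2) → Set ℝ, PathPFeasible r d p S ∧
            pBusy S = ENNReal.ofReal P) ∧
          ∀ s : Fin (ℓ * (ℓ + 1) / 2) → ℝ, PathNPFeasible r d p s →
            ENNReal.ofReal (c₂ * P * Real.log (ℓ * (ℓ + 1) / 2 : ℕ)) ≤ npBusy p s) := by
  refine ⟨20, 1 / 20, by norm_num, by norm_num, ?_, fun ℓ hℓ => ?_⟩
  · intro n hn r d p _ hrd S hS a ha
    obtain ⟨s, hs, hbusy⟩ := exists_pathNPFeasible_npBusy_le r d p hrd S hS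
    refine ⟨s, hs, hbusy.trans ?_⟩
    rw [Fintype.card_fin, ha, mul_right_comm, ENNReal.ofReal_mul (by positivity)]
    exact mul_le_mul_left (ENNReal.ofReal_le_ofReal (seven_add_six_mul_log_le hn)) _
  · exact exists_isPreemptionGap _ (Nat.div_pos (by nlinarith) two_pos)
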